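/- arXiv:1702.07914 — 7 statements merged into one kernel-verified Lean document; each statement's English description precedes it below -/
import Mathlib

section
/- Let G be a chordal graph that is butterfly-free, extended-butterfly-free, and double-gem-free, and let Q be a maximum clique of G. Then the induced subgraph of G on N(Q) = {v ∉ Q : v has a neighbor in Q} is 2K2-free. -/
open SimpleGraph

/-- `f : Fin n → V` describes an induced cycle of length `n` in `G`. -/
def IsInducedCycleFun {V : Type*} (G : SimpleGraph V) (n : ℕ) (f : Fin n → V) : Prop :=
  Function.Injective f ∧
    ∀ i j : Fin n, G.Adj (f i) (f j) ↔ ((i.val + 1) % n = j.val ∨ (j.val + 1) % n = i.val)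

/-- `G` is chordal: no induced cycle of length at least 4. -/
def Chordal {V : Type*} (G : SimpleGraph V) : Prop :=
  ∀ n, 4 ≤ n → ∀ f : Fin n → V, ¬ IsInducedCycleFun G n f

/-- `G` contains an induced copy of the pattern graph `H`. -/
def HasInducedCopy {V W : Type*} (G : SimpleGraph V) (H : SimpleGraph W) : Prop :=
  ∃ f : W → V, Function.Injective f ∧ ∀ a b : W, G.Adj (f a) (f b) ↔ H.Adj a b

/-- `Z` is (the vertex set of) a connected component of the induced subgraph `G[S]`. -/
def IsCompOf {V : Type*} (G : SimpleGraph V) (S Z : Set V) : Prop :=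
  ∃ c : (G.induce S).ConnectedComponent,
    Z = Subtype.val '' {v : S | (G.induce S).connectedComponentMk v = c}

/-- `Q` is a maximum clique of `G`. -/
def IsMaxClique {V : Type*} (G : SimpleGraph V) (Q : Set V) : Prop :=
  G.IsClique Q ∧ ∀ Q' : Set V, G.IsClique Q' → Q'.ncard ≤ Q.ncard

/-- `G` contains an induced subgraph which is the disjoint union of two
connected graphs on `m` vertices each. -/
def HasTwoConnParts {V : Type*} (G : SimpleGraph V) (m : ℕ) : Prop :=
  ∃ A B : Set V, Disjoint A B ∧ A.ncard = m ∧ B.ncard = m ∧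
    (G.induce A).Connected ∧ (G.induce B).Connected ∧
    ∀ a ∈ A, ∀ b ∈ B, ¬ G.Adj a b

/-- `2K2`: two disjoint edges. -/
def pat2K2 : SimpleGraph (Fin 4) :=
  SimpleGraph.fromRel (fun a b => (a = 0 ∧ b = 1) ∨ (a = 2 ∧ b = 3))

/-- `2P3`: two disjoint paths on three vertices. -/
def pat2P3 : SimpleGraph (Fin 6) :=
  SimpleGraph.fromRel (fun a b =>
    (a = 0 ∧ b = 1) ∨ (a = 1 ∧ b = 2) ∨ (a = 3 ∧ b = 4) ∨ (a = 4 ∧ b = 5))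

/-- `2K3`: two disjoint triangles. -/
def pat2K3 : SimpleGraph (Fin 6) :=
  SimpleGraph.fromRel (fun a b =>
    (a = 0 ∧ b = 1) ∨ (a = 1 ∧ b = 2) ∨ (a = 0 ∧ b = 2) ∨
    (a = 3 ∧ b = 4) ∨ (a = 4 ∧ b = 5) ∨ (a = 3 ∧ b = 5))

/-- `P3 + K3`: disjoint union of a path on three vertices and a triangle. -/
def patP3K3 : SimpleGraph (Fin 6) :=
  SimpleGraph.fromRel (fun a b =>
    (a = 0 ∧ b = 1) ∨ (a = 1 ∧ b = 2) ∨
    (a = 3 ∧ b = 4) ∨ (a = 4 ∧ b = 5) ∨ (a = 3 ∧ b = 5))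

/-- The butterfly: two triangles sharing exactly one vertex. -/
def patButterfly : SimpleGraph (Fin 5) :=
  SimpleGraph.fromRel (fun a b =>
    (a = 0 ∧ b = 1) ∨ (a = 1 ∧ b = 2) ∨ (a = 0 ∧ b = 2) ∨
    (a = 2 ∧ b = 3) ∨ (a = 3 ∧ b = 4) ∨ (a = 2 ∧ b = 4))

/-- The extended butterfly: two disjoint triangles joined by one edge. -/
def patExtButterfly : SimpleGraph (Fin 6) :=
  SimpleGraph.fromRel (fun a b =>
    (a = 0 ∧ b = 1) ∨ (a = 1 ∧ b = 2) ∨ (a = 0 ∧ b = 2) ∨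
    (a = 3 ∧ b = 4) ∨ (a = 4 ∧ b = 5) ∨ (a = 3 ∧ b = 5) ∨ (a = 2 ∧ b = 3))

/-- The extended co-P: a `P5` `0-1-2-3-4` plus a vertex `5` adjacent only to `0` and `1`. -/
def patExtCoP : SimpleGraph (Fin 6) :=
  SimpleGraph.fromRel (fun a b =>
    (a = 0 ∧ b = 1) ∨ (a = 1 ∧ b = 2) ∨ (a = 2 ∧ b = 3) ∨ (a = 3 ∧ b = 4) ∨
    (a = 5 ∧ b = 0) ∨ (a = 5 ∧ b = 1))

/-- The extended chair: a chair (`P4` `0-1-2-3` plus `4` adjacent only to `2`)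
plus a vertex `5` adjacent only to `0` and `1`. -/
def patExtChair : SimpleGraph (Fin 6) :=
  SimpleGraph.fromRel (fun a b =>
    (a = 0 ∧ b = 1) ∨ (a = 1 ∧ b = 2) ∨ (a = 2 ∧ b = 3) ∨ (a = 2 ∧ b = 4) ∨
    (a = 5 ∧ b = 0) ∨ (a = 5 ∧ b = 1))

/-- The double-gem: a gem (`P4` `0-1-2-3` plus `4` adjacent to all of them)
plus a vertex `5` adjacent only to `2` and `3`. -/
def patDoubleGem : SimpleGraph (Fin 6) :=
  SimpleGraph.fromRel (fun a b =>
    (a = 0 ∧ b = 1) ∨ (a = 1 ∧ b = 2) ∨ (a = 2 ∧ b = 3) ∨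
    (a = 4 ∧ b = 0) ∨ (a = 4 ∧ b = 1) ∨ (a = 4 ∧ b = 2) ∨ (a = 4 ∧ b = 3) ∨
    (a = 5 ∧ b = 2) ∨ (a = 5 ∧ b = 3))

/-- The chordless cycle on `n` vertices. -/
def patCycle (n : ℕ) : SimpleGraph (Fin n) :=
  SimpleGraph.fromRel (fun a b => (a.val + 1) % n = b.val)

/-- `G` is a split-matching-extended graph: its vertex set partitions into a
clique `Q`, an independent set `S`, and the vertex set `T` of an induced
matching, with no edges between `S` and `T`, and for every matching edge at
most one endpoint has a neighbor in `Q`. -/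
def SplitMatchingExtended {V : Type*} (G : SimpleGraph V) : Prop :=
  ∃ Q S T : Set V,
    (∀ v, v ∈ Q ∨ v ∈ S ∨ v ∈ T) ∧ Disjoint Q S ∧ Disjoint Q T ∧ Disjoint S T ∧
    G.IsClique Q ∧ (∀ a ∈ S, ∀ b ∈ S, ¬ G.Adj a b) ∧
    (∀ t ∈ T, ∃! t', t' ∈ T ∧ G.Adj t t') ∧
    (∀ s ∈ S, ∀ t ∈ T, ¬ G.Adj s t) ∧
    (∀ x ∈ T, ∀ y ∈ T, G.Adj x y →
      ¬ ((∃ q ∈ Q, G.Adj x q) ∧ (∃ q ∈ Q, G.Adj y q)))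

section Helpers
variable {V : Type*} (G : SimpleGraph V)

lemma no_c4 (hc : Chordal G) (a b c d : V)
    (hab : G.Adj a b) (hbc : G.Adj b c) (hcd : G.Adj c d) (hda : G.Adj d a)
    (nac : ¬ G.Adj a c) (nbd : ¬ G.Adj b d) (dac : a ≠ c) (dbd : b ≠ d) : False := by
  have mac : ¬ G.Adj c a := fun h => nac h.symm
  have mbd : ¬ G.Adj d b := fun h => nbd h.symm
  have s1 := hab.symm; have s2 := hbc.symm; have s3 := hcd.symm; have s4 := hda.symm
  refine hc 4 le_rfl ![a,b,c,d] ⟨?_, ?_⟩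
  · intro i j hij
    fin_cases i <;> fin_cases j <;>
      simp_all [hab.ne, hbc.ne, hcd.ne, hda.ne, hab.ne', hbc.ne', hcd.ne', hda.ne',
        dac.symm, dbd.symm]
  · intro i j
    fin_cases i <;> fin_cases j <;> simp_all [G.irrefl]

lemma butterfly_of (v0 v1 v2 v3 v4 : V)
    (h01 : G.Adj v0 v1) (h12 : G.Adj v1 v2) (h02 : G.Adj v0 v2)
    (h23 : G.Adj v2 v3) (h34 : G.Adj v3 v4) (h24 : G.Adj v2 v4)
    (n03 : ¬ G.Adj v0 v3) (n04 : ¬ G.Adj v0 v4)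
    (n13 : ¬ G.Adj v1 v3) (n14 : ¬ G.Adj v1 v4)
    (d03 : v0 ≠ v3) (d04 : v0 ≠ v4) (d13 : v1 ≠ v3) (d14 : v1 ≠ v4) :
    HasInducedCopy G patButterfly := by
  have s01 := h01.symm; have s12 := h12.symm; have s02 := h02.symm
  have s23 := h23.symm; have s34 := h34.symm; have s24 := h24.symm
  have m03 : ¬ G.Adj v3 v0 := fun h => n03 h.symm
  have m04 : ¬ G.Adj v4 v0 := fun h => n04 h.symm
  have m13 : ¬ G.Adj v3 v1 := fun h => n13 h.symm
  have m14 : ¬ G.Adj v4 v1 := fun h => n14 h.symm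
  refine ⟨![v0,v1,v2,v3,v4], ?_, ?_⟩
  · intro i j hij
    fin_cases i <;> fin_cases j <;>
      simp_all [h01.ne, h12.ne, h02.ne, h23.ne, h34.ne, h24.ne,
        h01.ne', h12.ne', h02.ne', h23.ne', h34.ne', h24.ne',
        d03.symm, d04.symm, d13.symm, d14.symm]
  · intro a b
    fin_cases a <;> fin_cases b <;> simp_all [patButterfly, G.irrefl]

set_option maxRecDepth 2000 in
lemma extButterfly_of (v0 v1 v2 v3 v4 v5 : V)
    (h01 : G.Adj v0 v1) (h12 : G.Adj v1 v2) (h02 : G.Adj v0 v2)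
    (h34 : G.Adj v3 v4) (h45 : G.Adj v4 v5) (h35 : G.Adj v3 v5)
    (h23 : G.Adj v2 v3)
    (n03 : ¬ G.Adj v0 v3) (n04 : ¬ G.Adj v0 v4) (n05 : ¬ G.Adj v0 v5)
    (n13 : ¬ G.Adj v1 v3) (n14 : ¬ G.Adj v1 v4) (n15 : ¬ G.Adj v1 v5)
    (n24 : ¬ G.Adj v2 v4) (n25 : ¬ G.Adj v2 v5)
    (d03 : v0 ≠ v3) (d04 : v0 ≠ v4) (d05 : v0 ≠ v5)
    (d13 : v1 ≠ v3) (d14 : v1 ≠ v4) (d15 : v1 ≠ v5)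
    (d24 : v2 ≠ v4) (d25 : v2 ≠ v5) :
    HasInducedCopy G patExtButterfly := by
  have s01 := h01.symm; have s12 := h12.symm; have s02 := h02.symm
  have s34 := h34.symm; have s45 := h45.symm; have s35 := h35.symm
  have s23 := h23.symm
  have m03 : ¬ G.Adj v3 v0 := fun h => n03 h.symm
  have m04 : ¬ G.Adj v4 v0 := fun h => n04 h.symm
  have m05 : ¬ G.Adj v5 v0 := fun h => n05 h.symm
  have m13 : ¬ G.Adj v3 v1 := fun h => n13 h.symm
  have m14 : ¬ G.Adj v4 v1 := fun h => n14 h.symm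
  have m15 : ¬ G.Adj v5 v1 := fun h => n15 h.symm
  have m24 : ¬ G.Adj v4 v2 := fun h => n24 h.symm
  have m25 : ¬ G.Adj v5 v2 := fun h => n25 h.symm
  have e5 : (![v0,v1,v2,v3,v4,v5] : Fin 6 → V) 5 = v5 := rfl
  refine ⟨![v0,v1,v2,v3,v4,v5], ?_, ?_⟩
  · intro i j hij
    fin_cases i <;> fin_cases j <;>
      simp_all [e5, h01.ne, h12.ne, h02.ne, h34.ne, h45.ne, h35.ne, h23.ne,
        h01.ne', h12.ne', h02.ne', h34.ne', h45.ne', h35.ne', h23.ne',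
        d03.symm, d04.symm, d05.symm, d13.symm, d14.symm, d15.symm, d24.symm, d25.symm]
  · intro a b
    fin_cases a <;> fin_cases b <;> simp_all [e5, patExtButterfly, G.irrefl]

set_option maxRecDepth 2000 in
lemma doubleGem_of (v0 v1 v2 v3 v4 v5 : V)
    (h01 : G.Adj v0 v1) (h12 : G.Adj v1 v2) (h23 : G.Adj v2 v3)
    (h40 : G.Adj v4 v0) (h41 : G.Adj v4 v1) (h42 : G.Adj v4 v2) (h43 : G.Adj v4 v3)
    (h52 : G.Adj v5 v2) (h53 : G.Adj v5 v3)
    (n02 : ¬ G.Adj v0 v2) (n03 : ¬ G.Adj v0 v3) (n13 : ¬ G.Adj v1 v3)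
    (n05 : ¬ G.Adj v0 v5) (n15 : ¬ G.Adj v1 v5) (n45 : ¬ G.Adj v4 v5)
    (d02 : v0 ≠ v2) (d03 : v0 ≠ v3) (d13 : v1 ≠ v3)
    (d05 : v0 ≠ v5) (d15 : v1 ≠ v5) (d45 : v4 ≠ v5) :
    HasInducedCopy G patDoubleGem := by
  have s01 := h01.symm; have s12 := h12.symm; have s23 := h23.symm
  have s40 := h40.symm; have s41 := h41.symm; have s42 := h42.symm; have s43 := h43.symm
  have s52 := h52.symm; have s53 := h53.symm
  have m02 : ¬ G.Adj v2 v0 := fun h => n02 h.symm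
  have m03 : ¬ G.Adj v3 v0 := fun h => n03 h.symm
  have m13 : ¬ G.Adj v3 v1 := fun h => n13 h.symm
  have m05 : ¬ G.Adj v5 v0 := fun h => n05 h.symm
  have m15 : ¬ G.Adj v5 v1 := fun h => n15 h.symm
  have m45 : ¬ G.Adj v5 v4 := fun h => n45 h.symm
  have e5 : (![v0,v1,v2,v3,v4,v5] : Fin 6 → V) 5 = v5 := rfl
  refine ⟨![v0,v1,v2,v3,v4,v5], ?_, ?_⟩
  · intro i j hij
    fin_cases i <;> fin_cases j <;>
      simp_all [e5, h01.ne, h12.ne, h23.ne, h40.ne, h41.ne, h42.ne, h43.ne, h52.ne, h53.ne,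
        h01.ne', h12.ne', h23.ne', h40.ne', h41.ne', h42.ne', h43.ne', h52.ne', h53.ne',
        d02.symm, d03.symm, d13.symm, d05.symm, d15.symm, d45.symm]
  · intro a b
    fin_cases a <;> fin_cases b <;> simp_all [e5, patDoubleGem, G.irrefl]

lemma common_nbr (hc : Chordal G) (Q : Set V) (hQ : G.IsClique Q)
    (a b : V) (ha : a ∉ Q) (hb : b ∉ Q) (hab : G.Adj a b)
    (qa qb : V) (hqa : qa ∈ Q) (hqb : qb ∈ Q)
    (haqa : G.Adj a qa) (hbqb : G.Adj b qb) :
    ∃ q ∈ Q, G.Adj a q ∧ G.Adj b q := by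
  by_cases h1 : G.Adj b qa
  · exact ⟨qa, hqa, haqa, h1⟩
  by_cases h2 : G.Adj a qb
  · exact ⟨qb, hqb, h2, hbqb⟩
  have hne : qa ≠ qb := fun h => h2 (h ▸ haqa)
  have hqq : G.Adj qa qb := hQ hqa hqb hne
  exact absurd (no_c4 G hc a b qb qa hab hbqb hqq.symm haqa.symm h2
    h1 (fun h => ha (h ▸ hqb)) (fun h => hb (h ▸ hqa))) not_false

end Helpers

theorem stmt9 {V : Type*} [Fintype V] (G : SimpleGraph V) (hc : Chordal G)
    (hbf : ¬ HasInducedCopy G patButterfly)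
    (hebf : ¬ HasInducedCopy G patExtButterfly)
    (hdg : ¬ HasInducedCopy G patDoubleGem)
    (Q : Set V) (hQ : IsMaxClique G Q) :
    ¬ HasInducedCopy (G.induce {v : V | v ∉ Q ∧ ∃ q ∈ Q, G.Adj v q}) pat2K2 := by
  rintro ⟨f, finj, hf⟩
  have dval : ∀ i j : Fin 4, i ≠ j → ((f i : V) ≠ (f j : V)) :=
    fun i j hij h => hij (finj (Subtype.ext h))
  have hadj : ∀ i j : Fin 4, G.Adj (f i : V) (f j : V) ↔ pat2K2.Adj i j := fun i j => hf i j
  obtain ⟨haQ, qa, hqaQ, haqa⟩ := (f 0).2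
  obtain ⟨hbQ, qb, hqbQ, hbqb⟩ := (f 1).2
  obtain ⟨hcQ, qc, hqcQ, hcqc⟩ := (f 2).2
  obtain ⟨hdQ, qd, hqdQ, hdqd⟩ := (f 3).2
  set a : V := (f 0 : V) with hadef
  set b : V := (f 1 : V) with hbdef
  set c : V := (f 2 : V) with hcdef
  set d : V := (f 3 : V) with hddef
  have p01 : pat2K2.Adj 0 1 := by simp [pat2K2, SimpleGraph.fromRel_adj]
  have p23 : pat2K2.Adj 2 3 := by simp [pat2K2, SimpleGraph.fromRel_adj]
  have p02 : ¬ pat2K2.Adj 0 2 := by simp [pat2K2, SimpleGraph.fromRel_adj]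
  have p03 : ¬ pat2K2.Adj 0 3 := by simp [pat2K2, SimpleGraph.fromRel_adj]
  have p12 : ¬ pat2K2.Adj 1 2 := by simp [pat2K2, SimpleGraph.fromRel_adj]
  have p13 : ¬ pat2K2.Adj 1 3 := by simp [pat2K2, SimpleGraph.fromRel_adj]
  have hab : G.Adj a b := (hadj 0 1).mpr p01
  have hcd : G.Adj c d := (hadj 2 3).mpr p23
  have nac : ¬ G.Adj a c := fun h => p02 ((hadj 0 2).mp h)
  have nad : ¬ G.Adj a d := fun h => p03 ((hadj 0 3).mp h)
  have nbc : ¬ G.Adj b c := fun h => p12 ((hadj 1 2).mp h)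
  have nbd : ¬ G.Adj b d := fun h => p13 ((hadj 1 3).mp h)
  have dac : a ≠ c := dval 0 2 (by decide)
  have dad : a ≠ d := dval 0 3 (by decide)
  have dbc : b ≠ c := dval 1 2 (by decide)
  have dbd : b ≠ d := dval 1 3 (by decide)
  obtain ⟨q1, hq1Q, haq1, hbq1⟩ :=
    common_nbr G hc Q hQ.1 a b haQ hbQ hab qa qb hqaQ hqbQ haqa hbqb
  obtain ⟨q2, hq2Q, hcq2, hdq2⟩ :=
    common_nbr G hc Q hQ.1 c d hcQ hdQ hcd qc qd hqcQ hqdQ hcqc hdqd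
  have daq1 : a ≠ q1 := fun h => haQ (h ▸ hq1Q)
  have dbq1 : b ≠ q1 := fun h => hbQ (h ▸ hq1Q)
  have dcq1 : c ≠ q1 := fun h => hcQ (h ▸ hq1Q)
  have ddq1 : d ≠ q1 := fun h => hdQ (h ▸ hq1Q)
  have daq2 : a ≠ q2 := fun h => haQ (h ▸ hq2Q)
  have dbq2 : b ≠ q2 := fun h => hbQ (h ▸ hq2Q)
  have dcq2 : c ≠ q2 := fun h => hcQ (h ▸ hq2Q)
  have ddq2 : d ≠ q2 := fun h => hdQ (h ▸ hq2Q)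
  by_cases hq : q1 = q2
  · rw [← hq] at hcq2 hdq2
    exact hbf (butterfly_of G a b q1 c d hab hbq1 haq1 hcq2.symm hcd hdq2.symm
      nac nad nbc nbd dac dad dbc dbd)
  have hqq : G.Adj q1 q2 := hQ.1 hq1Q hq2Q hq
  by_cases e1 : G.Adj q2 a
  · by_cases e2 : G.Adj q2 b
    · -- butterfly (a,b,q2,c,d)
      exact hbf (butterfly_of G a b q2 c d hab e2.symm e1.symm hcq2.symm hcd hdq2.symm
        nac nad nbc nbd dac dad dbc dbd)
    · by_cases f1 : G.Adj q1 c
      · by_cases f2 : G.Adj q1 d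
        · -- butterfly (c,d,q1,a,b)
          exact hbf (butterfly_of G c d q1 a b hcd f2.symm f1.symm haq1.symm hab hbq1.symm
            (fun h => nac h.symm) (fun h => nbc h.symm) (fun h => nad h.symm)
            (fun h => nbd h.symm) dac.symm dbc.symm dad.symm dbd.symm)
        · -- doubleGem (b,a,q2,c,q1,d)
          exact hdg (doubleGem_of G b a q2 c q1 d hab.symm e1.symm hcq2.symm
            hbq1.symm haq1.symm hqq f1 hdq2 hcd.symm
            (fun h => e2 h.symm) nbc nac nbd nad f2
            dbq2 dbc dac dbd dad ddq1.symm)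
      · by_cases f2 : G.Adj q1 d
        · -- doubleGem (b,a,q2,d,q1,c)
          exact hdg (doubleGem_of G b a q2 d q1 c hab.symm e1.symm hdq2.symm
            hbq1.symm haq1.symm hqq f2 hcq2 hcd
            (fun h => e2 h.symm) nbd nad nbc nac f1
            dbq2 dbd dad dbc dac dcq1.symm)
        · -- butterfly (c,d,q2,q1,a)
          exact hbf (butterfly_of G c d q2 q1 a hcd hdq2 hcq2 hqq.symm haq1.symm e1
            (fun h => f1 h.symm) (fun h => nac h.symm) (fun h => f2 h.symm)
            (fun h => nad h.symm) dcq1 dac.symm ddq1 dad.symm)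
  · by_cases e2 : G.Adj q2 b
    · by_cases f1 : G.Adj q1 c
      · by_cases f2 : G.Adj q1 d
        · -- butterfly (c,d,q1,a,b)
          exact hbf (butterfly_of G c d q1 a b hcd f2.symm f1.symm haq1.symm hab hbq1.symm
            (fun h => nac h.symm) (fun h => nbc h.symm) (fun h => nad h.symm)
            (fun h => nbd h.symm) dac.symm dbc.symm dad.symm dbd.symm)
        · -- doubleGem (a,b,q2,c,q1,d)
          exact hdg (doubleGem_of G a b q2 c q1 d hab e2.symm hcq2.symm
            haq1.symm hbq1.symm hqq f1 hdq2 hcd.symm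
            (fun h => e1 h.symm) nac nbc nad nbd f2
            daq2 dac dbc dad dbd ddq1.symm)
      · by_cases f2 : G.Adj q1 d
        · -- doubleGem (a,b,q2,d,q1,c)
          exact hdg (doubleGem_of G a b q2 d q1 c hab e2.symm hdq2.symm
            haq1.symm hbq1.symm hqq f2 hcq2 hcd
            (fun h => e1 h.symm) nad nbd nac nbc f1
            daq2 dad dbd dac dbc dcq1.symm)
        · -- butterfly (c,d,q2,q1,b)
          exact hbf (butterfly_of G c d q2 q1 b hcd hdq2 hcq2 hqq.symm hbq1.symm e2
            (fun h => f1 h.symm) (fun h => nbc h.symm) (fun h => f2 h.symm)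
            (fun h => nbd h.symm) dcq1 dbc.symm ddq1 dbd.symm)
    · by_cases f1 : G.Adj q1 c
      · by_cases f2 : G.Adj q1 d
        · -- butterfly (c,d,q1,a,b)
          exact hbf (butterfly_of G c d q1 a b hcd f2.symm f1.symm haq1.symm hab hbq1.symm
            (fun h => nac h.symm) (fun h => nbc h.symm) (fun h => nad h.symm)
            (fun h => nbd h.symm) dac.symm dbc.symm dad.symm dbd.symm)
        · -- butterfly (a,b,q1,q2,c)
          exact hbf (butterfly_of G a b q1 q2 c hab hbq1 haq1 hqq hcq2.symm f1
            (fun h => e1 h.symm) nac (fun h => e2 h.symm) nbc daq2 dac dbq2 dbc)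
      · by_cases f2 : G.Adj q1 d
        · -- butterfly (a,b,q1,q2,d)
          exact hbf (butterfly_of G a b q1 q2 d hab hbq1 haq1 hqq hdq2.symm f2
            (fun h => e1 h.symm) nad (fun h => e2 h.symm) nbd daq2 dad dbq2 dbd)
        · -- extButterfly (a,b,q1,q2,c,d)
          exact hebf (extButterfly_of G a b q1 q2 c d hab hbq1 haq1 hcq2.symm hcd hdq2.symm hqq
            (fun h => e1 h.symm) nac nad (fun h => e2 h.symm) nbc nbd f1 f2
            daq2 dac dad dbq2 dbc dbd dcq1.symm ddq1.symm)
end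

section
/- Every split-matching-extended graph is chordal. -/
open SimpleGraph

theorem stmt11 {V : Type*} [Fintype V] (G : SimpleGraph V)
    (hG : SplitMatchingExtended G) : Chordal G := by
  obtain ⟨Q, S, T, hcover, hQS, hQT, hST0, hQc, hSind, hTmatch, hST, hTQ⟩ := hG
  intro n hn f hf
  obtain ⟨hinj, hadj⟩ := hf
  haveI : NeZero n := ⟨by omega⟩
  -- mod-arithmetic helpers
  have hmf : ∀ a : ℕ, a < n → ((a + 1) % n = a + 1 ∨ ((a + 1) % n = 0 ∧ a + 1 = n)) := by
    intro a h
    rcases Nat.lt_or_ge (a + 1) n with h1 | h1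
    · exact Or.inl (Nat.mod_eq_of_lt h1)
    · right
      have h2 : a + 1 = n := by omega
      simp [h2]
  have hadd : ∀ i : Fin n, (i + 1).val = (i.val + 1) % n := by
    intro i
    rw [Fin.add_def, Fin.val_one', Nat.mod_eq_of_lt (show 1 < n by omega)]
  have hmlt : ∀ a : ℕ, (a + 1) % n < n := fun a => Nat.mod_lt _ (by omega)
  -- adjacency of consecutive cycle vertices
  have hA : ∀ i : Fin n, G.Adj (f i) (f (i + 1)) := by
    intro i
    rw [hadj]
    exact Or.inl (hadd i).symm
  -- non-adjacency at distance two
  have hN2 : ∀ i : Fin n, ¬ G.Adj (f i) (f (i + 1 + 1)) := by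
    intro i h
    rw [hadj] at h
    simp only [hadd] at h
    have h1 := hmf i.val i.isLt
    have h2 := hmf ((i.val + 1) % n) (hmlt i.val)
    have h3 := hmf (((i.val + 1) % n + 1) % n) (hmlt _)
    have h4 := i.isLt
    have h5 := hmlt i.val
    have h6 := hmlt ((i.val + 1) % n)
    omega
  -- distinctness at distance two
  have hD2 : ∀ i : Fin n, f i ≠ f (i + 1 + 1) := by
    intro i h
    have h0 : i = i + 1 + 1 := hinj h
    have hv := congrArg Fin.val h0
    simp only [hadd] at hv
    have h1 := hmf i.val i.isLt
    have h2 := hmf ((i.val + 1) % n) (hmlt i.val)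
    have h4 := i.isLt
    omega
  -- no chord between vertices at distance two: they can't both be in Q
  have hchord : ∀ i : Fin n, ¬ (f i ∈ Q ∧ f (i + 1 + 1) ∈ Q) := by
    rintro i ⟨h1, h2⟩
    exact hN2 i (hQc h1 h2 (hD2 i))
  -- no cycle vertex is in S
  have hQmem : ∀ i : Fin n, f i ∈ S → f (i + 1) ∈ Q := by
    intro i hi
    rcases hcover (f (i + 1)) with h | h | h
    · exact h
    · exact absurd (hA i) (hSind _ hi _ h)
    · exact absurd (hA i) (hST _ hi _ h)
  have hQmem' : ∀ i : Fin n, f (i + 1) ∈ S → f i ∈ Q := by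
    intro i hi
    rcases hcover (f i) with h | h | h
    · exact h
    · exact absurd (hA i).symm (hSind _ hi _ h)
    · exact absurd (hA i).symm (hST _ hi _ h)
  have hnotS : ∀ i : Fin n, f (i + 1) ∉ S := by
    intro i hi
    refine hchord i ⟨hQmem' i hi, hQmem (i + 1) hi⟩
  have hnotS' : ∀ i : Fin n, f i ∉ S := by
    intro i
    have h := hnotS (i - 1)
    have he : i - 1 + 1 = i := sub_add_cancel i 1
    rwa [he] at h
  -- no two consecutive cycle vertices in T
  have hnotTT : ∀ i : Fin n, ¬ (f (i + 1) ∈ T ∧ f (i + 1 + 1) ∈ T) := by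
    rintro i ⟨h1, h2⟩
    rcases hcover (f i) with hq | hs | ht
    · -- f i ∈ Q; look at f (i+1+1+1)
      rcases hcover (f (i + 1 + 1 + 1)) with hq' | hs' | ht'
      · -- both endpoints of the matching edge have Q-neighbors
        exact hTQ _ h1 _ h2 (hA (i + 1))
          ⟨⟨f i, hq, (hA i).symm⟩, ⟨f (i + 1 + 1 + 1), hq', hA (i + 1 + 1)⟩⟩
      · exact absurd (hA (i + 1 + 1)).symm (hST _ hs' _ h2)
      · -- f (i+1+1) has two matching partners
        obtain ⟨t', _, huniq⟩ := hTmatch (f (i + 1 + 1)) h2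
        have e1 := huniq (f (i + 1)) ⟨h1, (hA (i + 1)).symm⟩
        have e2 := huniq (f (i + 1 + 1 + 1)) ⟨ht', hA (i + 1 + 1)⟩
        exact hD2 (i + 1) (e1.trans e2.symm)
    · exact absurd (hA i) (hST _ hs _ h1)
    · -- f (i+1) has two matching partners
      obtain ⟨t', _, huniq⟩ := hTmatch (f (i + 1)) h1
      have e1 := huniq (f i) ⟨ht, (hA i).symm⟩
      have e2 := huniq (f (i + 1 + 1)) ⟨h2, hA (i + 1)⟩
      exact hD2 i (e1.trans e2.symm)
  have hnotTT' : ∀ i : Fin n, ¬ (f i ∈ T ∧ f (i + 1) ∈ T) := by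
    intro i
    have h := hnotTT (i - 1)
    have he : i - 1 + 1 = i := sub_add_cancel i 1
    rwa [he] at h
  -- hence no cycle vertex in T
  have hnotT : ∀ i : Fin n, f (i + 1) ∉ T := by
    intro i hi
    have h1 : f i ∈ Q := by
      rcases hcover (f i) with h | h | h
      · exact h
      · exact absurd h (hnotS' i)
      · exact absurd ⟨h, hi⟩ (hnotTT' i)
    have h2 : f (i + 1 + 1) ∈ Q := by
      rcases hcover (f (i + 1 + 1)) with h | h | h
      · exact h
      · exact absurd h (hnotS' (i + 1 + 1))
      · exact absurd ⟨hi, h⟩ (hnotTT' (i + 1))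
    exact hchord i ⟨h1, h2⟩
  have hnotT' : ∀ i : Fin n, f i ∉ T := by
    intro i
    have h := hnotT (i - 1)
    have he : i - 1 + 1 = i := sub_add_cancel i 1
    rwa [he] at h
  -- so every cycle vertex is in Q, contradicting the chord lemma
  have hallQ : ∀ i : Fin n, f i ∈ Q := by
    intro i
    rcases hcover (f i) with h | h | h
    · exact h
    · exact absurd h (hnotS' i)
    · exact absurd h (hnotT' i)
  exact hchord 0 ⟨hallQ 0, hallQ (0 + 1 + 1)⟩
end

section
/- Every split-matching-extended graph is a chordal-2-generalized split graph, i.e., it is chordal and has a clique Q such that every connected component of G[V \ Q] has at most 2 vertices. -/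
open SimpleGraph

theorem stmt12 {V : Type*} [Fintype V] (G : SimpleGraph V)
    (hG : SplitMatchingExtended G) :
    Chordal G ∧
      ∃ Q : Set V, G.IsClique Q ∧ ∀ Z : Set V, IsCompOf G Qᶜ Z → Z.ncard ≤ 2 := by
  obtain ⟨Q, S, T, hpart, hQS, hQT, hST, hQcl, hSS, hTM, hSTadj, hTQ⟩ := hG
  have hone : ∀ v x y : V, v ∉ Q → x ∉ Q → y ∉ Q → G.Adj v x → G.Adj v y → x = y := by
    intro v x y hv hx hy hvx hvy
    have hmem : ∀ w, w ∉ Q → w ∈ S ∨ w ∈ T := fun w hw => (hpart w).resolve_left hw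
    rcases hmem v hv with hvS | hvT
    · rcases hmem x hx with hxS | hxT
      · exact absurd hvx (hSS v hvS x hxS)
      · exact absurd hvx (hSTadj v hvS x hxT)
    · rcases hmem x hx with hxS | hxT
      · exact absurd hvx.symm (hSTadj x hxS v hvT)
      rcases hmem y hy with hyS | hyT
      · exact absurd hvy.symm (hSTadj y hyS v hvT)
      obtain ⟨t, ht, huniq⟩ := hTM v hvT
      rw [huniq x ⟨hxT, hvx⟩, huniq y ⟨hyT, hvy⟩]
  constructor
  · intro n hn f hf
    obtain ⟨hinj, hadj⟩ := hf
    have hn0 : 0 < n := by omega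
    set g : ℕ → V := fun m => f ⟨m % n, Nat.mod_lt _ hn0⟩ with hg
    have hgadj : ∀ i j : ℕ, G.Adj (g i) (g j) ↔ ((i+1) % n = j % n ∨ (j+1) % n = i % n) := by
      intro i j
      rw [hg]
      simp only [hadj, Nat.mod_add_mod]
    have hginj : ∀ i j : ℕ, g i = g j → i % n = j % n := by
      intro i j h
      have := hinj h
      exact Fin.mk.inj_iff.mp this
    have hgeq : ∀ i j : ℕ, i % n = j % n → g i = g j := by
      intro i j h
      rw [hg]
      exact congrArg f (Fin.ext h)
    have hdvd : ∀ a k : ℕ, (a + k) % n = a % n → n ∣ k := by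
      intro a k h
      have h2 := (Nat.modEq_iff_dvd' (Nat.le_add_right a k)).mp h.symm
      simpa using h2
    have hsmall : ∀ k : ℕ, 0 < k → k < 4 → ¬ n ∣ k := by
      intro k hk1 hk2 hd
      have := Nat.le_of_dvd hk1 hd
      omega
    have hC3 : ∀ i : ℕ, g i ∉ Q → g (i+1) ∉ Q → g (i+2) ∉ Q → False := by
      intro i h0 h1 h2
      have a1 : G.Adj (g (i+1)) (g i) := (hgadj _ _).mpr (Or.inr rfl)
      have a2 : G.Adj (g (i+1)) (g (i+2)) := (hgadj _ _).mpr (Or.inl rfl)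
      have he : g i = g (i+2) := hone _ _ _ h1 h0 h2 a1 a2
      exact hsmall 2 (by omega) (by omega) (hdvd i 2 (hginj _ _ he.symm))
    have h4case : ∀ b : ℕ, n = 4 → g b ∈ Q → g (b+1) ∈ Q → g (b+2) ∉ Q → g (b+3) ∉ Q → False := by
      intro b hn4 hb0 hb1 hb2 hb3
      have hmem : ∀ w, w ∉ Q → w ∈ S ∨ w ∈ T := fun w hw => (hpart w).resolve_left hw
      have axy : G.Adj (g (b+2)) (g (b+3)) := (hgadj _ _).mpr (Or.inl rfl)
      have hxT : g (b+2) ∈ T := by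
        rcases hmem _ hb2 with hxS | hxT
        · rcases hmem _ hb3 with hyS | hyT
          · exact absurd axy (hSS _ hxS _ hyS)
          · exact absurd axy (hSTadj _ hxS _ hyT)
        · exact hxT
      have hyT : g (b+3) ∈ T := by
        rcases hmem _ hb3 with hyS | hyT
        · exact absurd axy.symm (hSTadj _ hyS _ hxT)
        · exact hyT
      apply hTQ _ hxT _ hyT axy
      constructor
      · exact ⟨g (b+1), hb1, (hgadj _ _).mpr (Or.inr rfl)⟩
      · refine ⟨g b, hb0, ?_⟩
        have : G.Adj (g (b+3)) (g (b+4)) := (hgadj _ _).mpr (Or.inl rfl)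
        have he : g (b+4) = g b := hgeq _ _ (by subst hn4; omega)
        rwa [he] at this
    have hdist : ∀ i k : ℕ, 0 < k → k < 4 → g (i+k) ∈ Q → g i ∈ Q → G.Adj (g i) (g (i+k)) := by
      intro i k hk1 hk4 h1 h2
      refine hQcl h2 h1 ?_
      intro he
      exact hsmall k hk1 hk4 (hdvd i k (hginj _ _ he.symm))
    have key : ∀ a : ℕ, g a ∈ Q → False := by
      intro a ha
      by_cases h1 : g (a+1) ∈ Q
      · by_cases h2 : g (a+2) ∈ Q
        · have had := hdist a 2 (by omega) (by omega) h2 ha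
          rw [hgadj] at had
          rcases had with h | h
          · exact hsmall 1 (by omega) (by omega) (hdvd (a+1) 1 h.symm)
          · exact hsmall 3 (by omega) (by omega) (hdvd a 3 h)
        by_cases h3 : g (a+3) ∈ Q
        · have had := hdist (a+1) 2 (by omega) (by omega) (by rw [show a+1+2 = a+3 by omega]; exact h3) h1
          rw [hgadj] at had
          rcases had with h | h
          · exact hsmall 1 (by omega) (by omega) (hdvd (a+2) 1 h.symm)
          · exact hsmall 3 (by omega) (by omega) (hdvd (a+1) 3 h)
        by_cases h4 : g (a+4) ∈ Q
        · have had := hdist (a+1) 3 (by omega) (by omega) (by rw [show a+1+3 = a+4 by omega]; exact h4) h1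
          rw [hgadj] at had
          rcases had with h | h
          · exact hsmall 2 (by omega) (by omega) (hdvd (a+2) 2 h.symm)
          · have hd4 : n ∣ 4 := hdvd (a+1) 4 h
            have hn4 : n = 4 := by
              have := Nat.le_of_dvd (by omega) hd4
              omega
            exact h4case a hn4 ha h1 h2 h3
        · exact hC3 (a+2) h2 h3 (by rw [show a+2+2 = a+4 by omega]; exact h4)
      · by_cases h2 : g (a+2) ∈ Q
        · have had := hdist a 2 (by omega) (by omega) h2 ha
          rw [hgadj] at had
          rcases had with h | h
          · exact hsmall 1 (by omega) (by omega) (hdvd (a+1) 1 h.symm)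
          · exact hsmall 3 (by omega) (by omega) (hdvd a 3 h)
        by_cases h3 : g (a+3) ∈ Q
        · have had := hdist a 3 (by omega) (by omega) h3 ha
          rw [hgadj] at had
          rcases had with h | h
          · exact hsmall 2 (by omega) (by omega) (hdvd (a+1) 2 h.symm)
          · have hd4 : n ∣ 4 := hdvd a 4 h
            have hn4 : n = 4 := by
              have := Nat.le_of_dvd (by omega) hd4
              omega
            apply h4case (a+3) hn4 h3
            · exact (hgeq (a+3+1) a (by subst hn4; omega)) ▸ ha
            · rw [hgeq (a+3+2) (a+1) (by subst hn4; omega)]; exact h1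
            · rw [hgeq (a+3+3) (a+2) (by subst hn4; omega)]; exact h2
        · exact hC3 (a+1) h1 h2 (by rw [show a+1+2 = a+3 by omega]; exact h3)
    by_cases k0 : g 0 ∈ Q
    · exact key 0 k0
    by_cases k1 : g 1 ∈ Q
    · exact key 1 k1
    by_cases k2 : g 2 ∈ Q
    · exact key 2 k2
    · exact hC3 0 k0 k1 k2
  · refine ⟨Q, hQcl, ?_⟩
    intro Z hZ
    obtain ⟨c, hc⟩ := hZ
    obtain ⟨v, hv⟩ := c.exists_rep
    have hwalk : ∀ (u w : ↥(Qᶜ : Set V)) (p : (G.induce (Qᶜ : Set V)).Walk u w),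
        w = u ∨ (G.induce (Qᶜ : Set V)).Adj u w := by
      intro u w p
      induction p with
      | nil => exact Or.inl rfl
      | @cons u x w h p ih =>
        rcases ih with rfl | hxw
        · exact Or.inr h
        · by_cases huw : u = w
          · exact Or.inl huw.symm
          · have hadj1 : G.Adj x.val u.val := by
              have := h.symm
              simpa [SimpleGraph.comap_adj] using this
            have hadj2 : G.Adj x.val w.val := by
              simpa [SimpleGraph.comap_adj] using hxw
            have := hone x.val u.val w.val x.2 u.2 w.2 hadj1 hadj2
            exact absurd (Subtype.ext this) huw
    have hreach : ∀ u : ↥(Qᶜ : Set V), (G.induce (Qᶜ : Set V)).connectedComponentMk u = c →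
        u = v ∨ (G.induce (Qᶜ : Set V)).Adj v u := by
      intro u hu
      have : (G.induce (Qᶜ : Set V)).Reachable v u :=
        SimpleGraph.ConnectedComponent.exact (hv.trans hu.symm)
      obtain ⟨p⟩ := this
      exact hwalk v u p
    by_cases hvn : ∃ u : ↥(Qᶜ : Set V), (G.induce (Qᶜ : Set V)).Adj v u
    · obtain ⟨w, hw⟩ := hvn
      have hsub : Z ⊆ {v.val, w.val} := by
        rintro z hz
        rw [hc] at hz
        obtain ⟨u, hu, rfl⟩ := hz
        rcases hreach u hu with rfl | hadju
        · exact Or.inl rfl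
        · right
          have hadj1 : G.Adj v.val u.val := by simpa [SimpleGraph.comap_adj] using hadju
          have hadj2 : G.Adj v.val w.val := by simpa [SimpleGraph.comap_adj] using hw
          exact hone v.val u.val w.val v.2 u.2 w.2 hadj1 hadj2 ▸ rfl
      calc Z.ncard ≤ ({v.val, w.val} : Set V).ncard :=
            Set.ncard_le_ncard hsub (Set.toFinite _)
        _ ≤ 2 := (Set.ncard_insert_le _ _).trans (by simp)
    · have hsub : Z ⊆ {v.val} := by
        rintro z hz
        rw [hc] at hz
        obtain ⟨u, hu, rfl⟩ := hz
        rcases hreach u hu with rfl | hadju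
        · rfl
        · exact absurd ⟨u, hadju⟩ hvn
      calc Z.ncard ≤ ({v.val} : Set V).ncard :=
            Set.ncard_le_ncard hsub (Set.toFinite _)
        _ ≤ 2 := by simp
end

section
/- There exists a graph that is (2P3, 2K3, K3+P3, C5, C6, C7)-free but has no clique Q such that every connected component of G[V \ Q] has at most 2 vertices. Concretely, the 7-vertex graph consisting of a 4-cycle v1v2v3v4 together with pendant vertices x1, x2, x3 adjacent only to v1, v2, v3 respectively has this property. -/
open SimpleGraph

/-- The 7-vertex graph: a `C4` on `0,1,2,3` with pendant vertices `4,5,6`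
attached to `0,1,2` respectively. -/
def exGraph : SimpleGraph (Fin 7) :=
  SimpleGraph.fromRel (fun a b =>
    (a = 0 ∧ b = 1) ∨ (a = 1 ∧ b = 2) ∨ (a = 2 ∧ b = 3) ∨ (a = 3 ∧ b = 0) ∨
    (a = 0 ∧ b = 4) ∨ (a = 1 ∧ b = 5) ∨ (a = 2 ∧ b = 6))


section Aux

instance : DecidableRel exGraph.Adj := fun a b =>
  decidable_of_iff _ (SimpleGraph.fromRel_adj _ a b).symm

instance : DecidableRel pat2P3.Adj := fun a b =>
  decidable_of_iff _ (SimpleGraph.fromRel_adj _ a b).symm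

instance : DecidableRel pat2K3.Adj := fun a b =>
  decidable_of_iff _ (SimpleGraph.fromRel_adj _ a b).symm

instance : DecidableRel patP3K3.Adj := fun a b =>
  decidable_of_iff _ (SimpleGraph.fromRel_adj _ a b).symm

instance (n : ℕ) : DecidableRel (patCycle n).Adj := fun a b =>
  decidable_of_iff _ (SimpleGraph.fromRel_adj _ a b).symm

/-- Boolean adjacency table for `exGraph`. -/
def adjB (a b : Fin 7) : Bool :=
  List.elem (a.val * 10 + b.val) [1, 10, 12, 21, 23, 32, 3, 30, 4, 40, 15, 51, 26, 62]

set_option maxHeartbeats 2000000 in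
theorem adj_iff : ∀ a b : Fin 7, exGraph.Adj a b ↔ adjB a b = true := by decide

theorem adjT {a b : Fin 7} (h : exGraph.Adj a b) : adjB a b = true := (adj_iff a b).mp h

theorem adjF {a b : Fin 7} (h : ¬ exGraph.Adj a b) : adjB a b = false := by
  cases hab : adjB a b
  · rfl
  · exact absurd ((adj_iff a b).mpr hab) h

theorem keyTri : ∀ a b : Fin 7, adjB a b = true → ∀ c : Fin 7, adjB b c = true →
    adjB a c = true → False := by decide

theorem key5 : ∀ a b : Fin 7, adjB a b = true → ∀ c : Fin 7, adjB b c = true →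
    ∀ d : Fin 7, adjB c d = true → ∀ e : Fin 7, adjB d e = true →
    adjB e a = true → False := by decide

theorem key7 : ∀ a b : Fin 7, adjB a b = true → ∀ c : Fin 7, adjB b c = true →
    ∀ d : Fin 7, adjB c d = true → ∀ e : Fin 7, adjB d e = true →
    ∀ f : Fin 7, adjB e f = true → ∀ g : Fin 7, adjB f g = true →
    adjB g a = true → False := by decide

theorem key6 : ∀ a b : Fin 7, adjB a b = true → ∀ c : Fin 7, adjB b c = true →
    adjB a c = false → ∀ d : Fin 7, adjB c d = true → adjB b d = false →
    adjB a d = false → ∀ e : Fin 7, adjB d e = true → adjB c e = false →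
    adjB b e = false → ∀ f : Fin 7, adjB e f = true → adjB f a = true →
    adjB d f = false → adjB e a = false → adjB f b = false →
    adjB c f = false → False := by decide

theorem key2P3 : ∀ a b : Fin 7, adjB a b = true → ∀ c : Fin 7, adjB b c = true →
    a ≠ c → adjB a c = false → ∀ d : Fin 7, adjB a d = false →
    adjB b d = false → adjB c d = false → ∀ e : Fin 7, adjB d e = true →
    adjB a e = false → adjB b e = false → adjB c e = false →
    ∀ f : Fin 7, adjB e f = true → d ≠ f → adjB d f = false →
    adjB a f = false → adjB b f = false → adjB c f = false → False := by decide

theorem compBig (Q : Set (Fin 7))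
    (hAll : ∀ Z : Set (Fin 7), IsCompOf exGraph Qᶜ Z → Z.ncard ≤ 2)
    (u v w : Fin 7) (hu : u ∉ Q) (hv : v ∉ Q) (hw : w ∉ Q)
    (huv : u ≠ v) (huw : u ≠ w) (hvw : v ≠ w)
    (auv : exGraph.Adj u v) (avw : exGraph.Adj v w) : False := by
  have hu' : u ∈ Qᶜ := hu
  have hv' : v ∈ Qᶜ := hv
  have hw' : w ∈ Qᶜ := hw
  set G' := exGraph.induce (Qᶜ : Set (Fin 7)) with hG'
  have a1 : G'.Adj ⟨u, hu'⟩ ⟨v, hv'⟩ := auv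
  have a2 : G'.Adj ⟨v, hv'⟩ ⟨w, hw'⟩ := avw
  set c := G'.connectedComponentMk ⟨v, hv'⟩ with hc
  set Z : Set (Fin 7) :=
    Subtype.val '' {x : (Qᶜ : Set (Fin 7)) | G'.connectedComponentMk x = c} with hZ
  have hcomp : IsCompOf exGraph Qᶜ Z := ⟨c, rfl⟩
  have hle := hAll Z hcomp
  have memu : u ∈ Z :=
    ⟨⟨u, hu'⟩, SimpleGraph.ConnectedComponent.sound a1.reachable, rfl⟩
  have memv : v ∈ Z := ⟨⟨v, hv'⟩, rfl, rfl⟩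
  have memw : w ∈ Z :=
    ⟨⟨w, hw'⟩, SimpleGraph.ConnectedComponent.sound a2.symm.reachable, rfl⟩
  have hsub : ({u, v, w} : Set (Fin 7)) ⊆ Z := by
    intro x hx
    rcases hx with h | h | h <;> subst h <;> assumption
  have h3 : ({u, v, w} : Set (Fin 7)).ncard = 3 :=
    Set.ncard_eq_three.mpr ⟨u, v, w, huv, huw, hvw, rfl⟩
  have : 3 ≤ Z.ncard := h3 ▸ Set.ncard_le_ncard hsub (Set.toFinite _)
  omega

end Aux

theorem stmt13 :
    (¬ HasInducedCopy exGraph pat2P3 ∧ ¬ HasInducedCopy exGraph pat2K3 ∧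
     ¬ HasInducedCopy exGraph patP3K3 ∧ ¬ HasInducedCopy exGraph (patCycle 5) ∧
     ¬ HasInducedCopy exGraph (patCycle 6) ∧ ¬ HasInducedCopy exGraph (patCycle 7)) ∧
    ¬ ∃ Q : Set (Fin 7), exGraph.IsClique Q ∧
        ∀ Z : Set (Fin 7), IsCompOf exGraph Qᶜ Z → Z.ncard ≤ 2 := by
  constructor
  · refine ⟨?_, ?_, ?_, ?_, ?_, ?_⟩
    · rintro ⟨f, hinj, hadj⟩
      exact key2P3 (f 0) (f 1) (adjT ((hadj 0 1).mpr (by decide)))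
        (f 2) (adjT ((hadj 1 2).mpr (by decide)))
        (hinj.ne (by decide))
        (adjF (fun h => (by decide : ¬ pat2P3.Adj 0 2) ((hadj 0 2).mp h)))
        (f 3)
        (adjF (fun h => (by decide : ¬ pat2P3.Adj 0 3) ((hadj 0 3).mp h)))
        (adjF (fun h => (by decide : ¬ pat2P3.Adj 1 3) ((hadj 1 3).mp h)))
        (adjF (fun h => (by decide : ¬ pat2P3.Adj 2 3) ((hadj 2 3).mp h)))
        (f 4) (adjT ((hadj 3 4).mpr (by decide)))
        (adjF (fun h => (by decide : ¬ pat2P3.Adj 0 4) ((hadj 0 4).mp h)))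
        (adjF (fun h => (by decide : ¬ pat2P3.Adj 1 4) ((hadj 1 4).mp h)))
        (adjF (fun h => (by decide : ¬ pat2P3.Adj 2 4) ((hadj 2 4).mp h)))
        (f 5) (adjT ((hadj 4 5).mpr (by decide)))
        (hinj.ne (by decide))
        (adjF (fun h => (by decide : ¬ pat2P3.Adj 3 5) ((hadj 3 5).mp h)))
        (adjF (fun h => (by decide : ¬ pat2P3.Adj 0 5) ((hadj 0 5).mp h)))
        (adjF (fun h => (by decide : ¬ pat2P3.Adj 1 5) ((hadj 1 5).mp h)))
        (adjF (fun h => (by decide : ¬ pat2P3.Adj 2 5) ((hadj 2 5).mp h)))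
    · rintro ⟨f, hinj, hadj⟩
      exact keyTri (f 0) (f 1) (adjT ((hadj 0 1).mpr (by decide)))
        (f 2) (adjT ((hadj 1 2).mpr (by decide)))
        (adjT ((hadj 0 2).mpr (by decide)))
    · rintro ⟨f, hinj, hadj⟩
      exact keyTri (f 3) (f 4) (adjT ((hadj 3 4).mpr (by decide)))
        (f 5) (adjT ((hadj 4 5).mpr (by decide)))
        (adjT ((hadj 3 5).mpr (by decide)))
    · rintro ⟨f, hinj, hadj⟩
      exact key5 (f 0) (f 1) (adjT ((hadj 0 1).mpr (by decide)))
        (f 2) (adjT ((hadj 1 2).mpr (by decide)))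
        (f 3) (adjT ((hadj 2 3).mpr (by decide)))
        (f 4) (adjT ((hadj 3 4).mpr (by decide)))
        (adjT ((hadj 4 0).mpr (by decide)))
    · rintro ⟨f, hinj, hadj⟩
      exact key6 (f 0) (f 1) (adjT ((hadj 0 1).mpr (by decide)))
        (f 2) (adjT ((hadj 1 2).mpr (by decide)))
        (adjF (fun h => (by decide : ¬ (patCycle 6).Adj 0 2) ((hadj 0 2).mp h)))
        (f 3) (adjT ((hadj 2 3).mpr (by decide)))
        (adjF (fun h => (by decide : ¬ (patCycle 6).Adj 1 3) ((hadj 1 3).mp h)))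
        (adjF (fun h => (by decide : ¬ (patCycle 6).Adj 0 3) ((hadj 0 3).mp h)))
        (f 4) (adjT ((hadj 3 4).mpr (by decide)))
        (adjF (fun h => (by decide : ¬ (patCycle 6).Adj 2 4) ((hadj 2 4).mp h)))
        (adjF (fun h => (by decide : ¬ (patCycle 6).Adj 1 4) ((hadj 1 4).mp h)))
        (f 5) (adjT ((hadj 4 5).mpr (by decide)))
        (adjT ((hadj 5 0).mpr (by decide)))
        (adjF (fun h => (by decide : ¬ (patCycle 6).Adj 3 5) ((hadj 3 5).mp h)))
        (adjF (fun h => (by decide : ¬ (patCycle 6).Adj 4 0) ((hadj 4 0).mp h)))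
        (adjF (fun h => (by decide : ¬ (patCycle 6).Adj 5 1) ((hadj 5 1).mp h)))
        (adjF (fun h => (by decide : ¬ (patCycle 6).Adj 2 5) ((hadj 2 5).mp h)))
    · rintro ⟨f, hinj, hadj⟩
      exact key7 (f 0) (f 1) (adjT ((hadj 0 1).mpr (by decide)))
        (f 2) (adjT ((hadj 1 2).mpr (by decide)))
        (f 3) (adjT ((hadj 2 3).mpr (by decide)))
        (f 4) (adjT ((hadj 3 4).mpr (by decide)))
        (f 5) (adjT ((hadj 4 5).mpr (by decide)))
        (f 6) (adjT ((hadj 5 6).mpr (by decide)))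
        (adjT ((hadj 6 0).mpr (by decide)))
  · rintro ⟨Q, hQ, hAll⟩
    have hno : ∀ p q : Fin 7, p ∈ Q → ¬ exGraph.Adj p q → p ≠ q → q ∉ Q :=
      fun p q hp hnadj hne hq => hnadj (hQ hp hq hne)
    by_cases h0 : (0 : Fin 7) ∈ Q <;> by_cases h1 : (1 : Fin 7) ∈ Q <;>
      by_cases h2 : (2 : Fin 7) ∈ Q <;> by_cases h3 : (3 : Fin 7) ∈ Q
    all_goals first
      | exact (by decide : ¬ exGraph.Adj 0 2) (hQ h0 h2 (by decide))
      | exact (by decide : ¬ exGraph.Adj 1 3) (hQ h1 h3 (by decide))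
      | exact compBig Q hAll 5 1 2 (hno 0 5 h0 (by decide) (by decide)) h1 h2
          (by decide) (by decide) (by decide) (by decide) (by decide)
      | exact compBig Q hAll 6 2 3 (hno 1 6 h1 (by decide) (by decide)) h2 h3
          (by decide) (by decide) (by decide) (by decide) (by decide)
      | exact compBig Q hAll 4 0 3 (hno 1 4 h1 (by decide) (by decide)) h0 h3
          (by decide) (by decide) (by decide) (by decide) (by decide)
      | exact compBig Q hAll 4 0 3 (hno 2 4 h2 (by decide) (by decide)) h0 h3
          (by decide) (by decide) (by decide) (by decide) (by decide)
      | exact compBig Q hAll 4 0 1 (hno 2 4 h2 (by decide) (by decide)) h0 h1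
          (by decide) (by decide) (by decide) (by decide) (by decide)
      | exact compBig Q hAll 5 1 2 (hno 3 5 h3 (by decide) (by decide)) h1 h2
          (by decide) (by decide) (by decide) (by decide) (by decide)
      | exact compBig Q hAll 6 2 3 (hno 0 6 h0 (by decide) (by decide)) h2 h3
          (by decide) (by decide) (by decide) (by decide) (by decide)
      | exact compBig Q hAll 0 1 2 h0 h1 h2
          (by decide) (by decide) (by decide) (by decide) (by decide)
end

section
/- Let G be a (2P3, 2K3, P3+K3)-free graph, Q a clique of G, and Z a connected component of G[V \ Q] with at least 3 vertices. Then at most 2 vertices of Q have no neighbor in Z, and every connected component of G[V \ (Q ∪ Z)] other than Z has at most 2 vertices. -/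
open SimpleGraph

section AuxStmt14

variable {V : Type*} {G : SimpleGraph V}

private lemma walk_triple14 {W : Type*} (H : SimpleGraph W) {u v : W} (hne : u ≠ v)
    (hr : H.Reachable u v) :
    H.Adj u v ∨ ∃ a b c : W, H.Reachable u a ∧ H.Reachable u b ∧ H.Reachable u c ∧
      a ≠ b ∧ a ≠ c ∧ b ≠ c ∧ H.Adj a b ∧ H.Adj b c := by
  classical
  obtain ⟨w⟩ := hr
  obtain ⟨p, hp⟩ := w.toPath
  cases p with
  | nil => exact absurd rfl hne
  | cons h q =>
    cases q with
    | nil => exact Or.inl h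
    | cons h' q' =>
      right
      refine ⟨u, _, _, Reachable.refl u, h.reachable, h.reachable.trans h'.reachable,
        h.ne, ?_, h'.ne, h, h'⟩
      have hnd := hp.support_nodup
      rw [Walk.support_cons, List.nodup_cons] at hnd
      intro heq
      exact hnd.1 (by rw [heq, Walk.support_cons]; exact List.mem_cons_of_mem _ q'.start_mem_support)

private lemma isCompOf_subset14 {S Z : Set V} (h : IsCompOf G S Z) : Z ⊆ S := by
  obtain ⟨c, rfl⟩ := h
  rintro z ⟨⟨z, hz⟩, -, rfl⟩
  exact hz

private lemma not_adj_out14 {S Z : Set V} (h : IsCompOf G S Z) {z z' : V}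
    (hz : z ∈ Z) (hz'S : z' ∈ S) (hz'Z : z' ∉ Z) : ¬ G.Adj z z' := by
  intro hadj
  obtain ⟨c, rfl⟩ := h
  obtain ⟨⟨z, hzS⟩, hzc, rfl⟩ := hz
  refine hz'Z ⟨⟨z', hz'S⟩, ?_, rfl⟩
  have : (G.induce S).Adj ⟨z', hz'S⟩ ⟨z, hzS⟩ := hadj.symm
  exact (ConnectedComponent.connectedComponentMk_eq_of_adj this).trans hzc

private lemma exists_triple14 {S Z : Set V} (h : IsCompOf G S Z) (hfin : Z.Finite)
    (h3 : 3 ≤ Z.ncard) :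
    ∃ a b c : V, a ∈ Z ∧ b ∈ Z ∧ c ∈ Z ∧ a ≠ b ∧ a ≠ c ∧ b ≠ c ∧
      G.Adj a b ∧ G.Adj b c := by
  obtain ⟨comp, rfl⟩ := h
  set Z := Subtype.val '' {v : S | (G.induce S).connectedComponentMk v = comp} with hZdef
  obtain ⟨u, hu, v, hv, w, hw, huv, huw, hvw⟩ := (Set.two_lt_ncard hfin).mp (by omega)
  obtain ⟨u', hu'c, rfl⟩ := hu
  obtain ⟨v', hv'c, rfl⟩ := hv
  obtain ⟨w', hw'c, rfl⟩ := hw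
  have memZ : ∀ x : S, (G.induce S).connectedComponentMk x = comp → x.val ∈ Z :=
    fun x hx => ⟨x, hx, rfl⟩
  have hne : ∀ {x y : S}, x.val ≠ y.val → x ≠ y := fun h hh => h (congrArg _ hh)
  have hval : ∀ {x y : S}, x ≠ y → x.val ≠ y.val := fun h hh => h (Subtype.ext hh)
  have key : ∀ x y : S, (G.induce S).connectedComponentMk x = comp → x ≠ y →
      (G.induce S).Reachable x y →
      (G.induce S).Adj x y ∨ ∃ a b c : V, a ∈ Z ∧ b ∈ Z ∧ c ∈ Z ∧ a ≠ b ∧ a ≠ c ∧ b ≠ c ∧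
        G.Adj a b ∧ G.Adj b c := by
    intro x y hxc hxy hr
    rcases walk_triple14 _ hxy hr with hadj | ⟨a, b, c, ra, rb, rc, hab, hac, hbc, h1, h2⟩
    · exact Or.inl hadj
    · exact Or.inr ⟨a.val, b.val, c.val,
        memZ a ((ConnectedComponent.sound ra).symm.trans hxc),
        memZ b ((ConnectedComponent.sound rb).symm.trans hxc),
        memZ c ((ConnectedComponent.sound rc).symm.trans hxc),
        hval hab, hval hac, hval hbc, h1, h2⟩
  have ruv : (G.induce S).Reachable u' v' := ConnectedComponent.exact (hu'c.trans hv'c.symm)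
  have ruw : (G.induce S).Reachable u' w' := ConnectedComponent.exact (hu'c.trans hw'c.symm)
  have rvw : (G.induce S).Reachable v' w' := ConnectedComponent.exact (hv'c.trans hw'c.symm)
  rcases key u' v' hu'c (hne huv) ruv with h1 | hdone
  · rcases key u' w' hu'c (hne huw) ruw with h2 | hdone
    · rcases key v' w' hv'c (hne hvw) rvw with h3' | hdone
      · exact ⟨u'.val, v'.val, w'.val, memZ u' hu'c, memZ v' hv'c, memZ w' hw'c,
          huv, huw, hvw, h1, h3'⟩
      · exact hdone
    · exact hdone
  · exact hdone

/-- helper vector -/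
private def vec6 {V : Type*} (a b c d e f : V) : Fin 6 → V := fun i =>
  if i.val = 0 then a else if i.val = 1 then b else if i.val = 2 then c
  else if i.val = 3 then d else if i.val = 4 then e else f

instance instDecAdj2P3 : DecidableRel pat2P3.Adj := fun a b =>
  decidable_of_iff _ (SimpleGraph.fromRel_adj _ a b).symm

instance instDecAdj2K3 : DecidableRel pat2K3.Adj := fun a b =>
  decidable_of_iff _ (SimpleGraph.fromRel_adj _ a b).symm

instance instDecAdjP3K3 : DecidableRel patP3K3.Adj := fun a b =>
  decidable_of_iff _ (SimpleGraph.fromRel_adj _ a b).symm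

private lemma copy_of14 (G : SimpleGraph V) (P : SimpleGraph (Fin 6)) (x : Fin 6 → V)
    (hinj : Function.Injective x)
    (h : ∀ a b : Fin 6, a < b → (G.Adj (x a) (x b) ↔ P.Adj a b)) :
    HasInducedCopy G P := by
  refine ⟨x, hinj, fun a b => ?_⟩
  rcases lt_trichotomy a b with hlt | heq | hgt
  · exact h a b hlt
  · subst heq; simp
  · rw [G.adj_comm, P.adj_comm]; exact h b a hgt

private lemma inj6 {a b c d e f : V} (h1 : a ≠ b) (h2 : a ≠ c) (h3 : a ≠ d)
    (h4 : a ≠ e) (h5 : a ≠ f) (h6 : b ≠ c) (h7 : b ≠ d) (h8 : b ≠ e) (h9 : b ≠ f)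
    (h10 : c ≠ d) (h11 : c ≠ e) (h12 : c ≠ f) (h13 : d ≠ e) (h14 : d ≠ f) (h15 : e ≠ f) :
    Function.Injective (vec6 a b c d e f) := by
  intro i j hij
  fin_cases i <;> fin_cases j <;> simp [vec6] at hij ⊢ <;> simp_all

end AuxStmt14

theorem stmt14 {V : Type*} [Fintype V] (G : SimpleGraph V)
    (h1 : ¬ HasInducedCopy G pat2P3) (h2 : ¬ HasInducedCopy G pat2K3)
    (h3 : ¬ HasInducedCopy G patP3K3)
    (Q Z : Set V) (hQ : G.IsClique Q) (hZ : IsCompOf G Qᶜ Z) (hZ3 : 3 ≤ Z.ncard) :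
    {q ∈ Q | ¬ ∃ z ∈ Z, G.Adj q z}.ncard ≤ 2 ∧
      ∀ Z' : Set V, IsCompOf G (Q ∪ Z)ᶜ Z' → Z'.ncard ≤ 2 := by
  classical
  obtain ⟨a, b, c, haZ, hbZ, hcZ, hab, hac, hbc, Aab, Abc⟩ :=
    exists_triple14 hZ (Set.toFinite Z) hZ3
  have hZQ : Z ⊆ Qᶜ := isCompOf_subset14 hZ
  have hzq : ∀ z ∈ Z, ∀ q ∈ Q, z ≠ q := fun z hz q hq he => (hZQ hz) (he ▸ hq)
  constructor
  · by_contra hcon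
    rw [not_le] at hcon
    obtain ⟨q0, hq0, q1, hq1, q2, hq2, h01, h02, h12⟩ :=
      (Set.two_lt_ncard (Set.toFinite _)).mp hcon
    have hq0Q : q0 ∈ Q := hq0.1
    have hq1Q : q1 ∈ Q := hq1.1
    have hq2Q : q2 ∈ Q := hq2.1
    have Aq01 : G.Adj q0 q1 := hQ hq0Q hq1Q h01
    have Aq02 : G.Adj q0 q2 := hQ hq0Q hq2Q h02
    have Aq12 : G.Adj q1 q2 := hQ hq1Q hq2Q h12
    have N0 : ∀ z ∈ Z, ¬ G.Adj z q0 := fun z hz h => hq0.2 ⟨z, hz, h.symm⟩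
    have N1 : ∀ z ∈ Z, ¬ G.Adj z q1 := fun z hz h => hq1.2 ⟨z, hz, h.symm⟩
    have N2 : ∀ z ∈ Z, ¬ G.Adj z q2 := fun z hz h => hq2.2 ⟨z, hz, h.symm⟩
    have na0 : ¬ G.Adj a q0 := N0 a haZ
    have na1 : ¬ G.Adj a q1 := N1 a haZ
    have na2 : ¬ G.Adj a q2 := N2 a haZ
    have nb0 : ¬ G.Adj b q0 := N0 b hbZ
    have nb1 : ¬ G.Adj b q1 := N1 b hbZ
    have nb2 : ¬ G.Adj b q2 := N2 b hbZ
    have nc0 : ¬ G.Adj c q0 := N0 c hcZ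
    have nc1 : ¬ G.Adj c q1 := N1 c hcZ
    have nc2 : ¬ G.Adj c q2 := N2 c hcZ
    have d0 : a ≠ q0 := hzq a haZ q0 hq0Q
    have d1 : a ≠ q1 := hzq a haZ q1 hq1Q
    have d2 : a ≠ q2 := hzq a haZ q2 hq2Q
    have d3 : b ≠ q0 := hzq b hbZ q0 hq0Q
    have d4 : b ≠ q1 := hzq b hbZ q1 hq1Q
    have d5 : b ≠ q2 := hzq b hbZ q2 hq2Q
    have d6 : c ≠ q0 := hzq c hcZ q0 hq0Q
    have d7 : c ≠ q1 := hzq c hcZ q1 hq1Q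
    have d8 : c ≠ q2 := hzq c hcZ q2 hq2Q
    by_cases hACadj : G.Adj a c
    · refine h2 (copy_of14 G pat2K3 (vec6 a b c q0 q1 q2)
        (inj6 hab hac d0 d1 d2 hbc d3 d4 d5 d6 d7 d8 h01 h02 h12) ?_)
      intro i j hij
      fin_cases i <;> fin_cases j <;> simp only [vec6] <;> norm_num <;>
        first
          | exact absurd hij (by decide)
          | exact iff_of_true (by assumption) (by decide)
          | exact iff_of_false (by assumption) (by decide)
    · refine h3 (copy_of14 G patP3K3 (vec6 a b c q0 q1 q2)
        (inj6 hab hac d0 d1 d2 hbc d3 d4 d5 d6 d7 d8 h01 h02 h12) ?_)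
      intro i j hij
      fin_cases i <;> fin_cases j <;> simp only [vec6] <;> norm_num <;>
        first
          | exact absurd hij (by decide)
          | exact iff_of_true (by assumption) (by decide)
          | exact iff_of_false (by assumption) (by decide)
  · intro Z' hZ'
    by_contra hcon
    rw [not_le] at hcon
    obtain ⟨d, e, f, hdZ', heZ', hfZ', hde, hdf, hef, Ade, Aef⟩ :=
      exists_triple14 hZ' (Set.toFinite Z') (by omega)
    have hZ'sub : Z' ⊆ (Q ∪ Z)ᶜ := isCompOf_subset14 hZ'
    have hsep : ∀ z' ∈ Z', z' ∈ Qᶜ ∧ z' ∉ Z := by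
      intro z' hz'
      have := hZ'sub hz'
      rw [Set.compl_union] at this
      exact ⟨this.1, this.2⟩
    have cross : ∀ z ∈ Z, ∀ z' ∈ Z', ¬ G.Adj z z' := by
      intro z hz z' hz'
      exact not_adj_out14 hZ hz (hsep z' hz').1 (hsep z' hz').2
    have crossne : ∀ z ∈ Z, ∀ z' ∈ Z', z ≠ z' := by
      intro z hz z' hz' he
      exact (hsep z' hz').2 (he ▸ hz)
    have nad : ¬ G.Adj a d := cross a haZ d hdZ'
    have nae : ¬ G.Adj a e := cross a haZ e heZ'
    have naf : ¬ G.Adj a f := cross a haZ f hfZ'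
    have nbd : ¬ G.Adj b d := cross b hbZ d hdZ'
    have nbe : ¬ G.Adj b e := cross b hbZ e heZ'
    have nbf : ¬ G.Adj b f := cross b hbZ f hfZ'
    have ncd : ¬ G.Adj c d := cross c hcZ d hdZ'
    have nce : ¬ G.Adj c e := cross c hcZ e heZ'
    have ncf : ¬ G.Adj c f := cross c hcZ f hfZ'
    have nda : ¬ G.Adj d a := fun h => nad h.symm
    have nea : ¬ G.Adj e a := fun h => nae h.symm
    have nfa : ¬ G.Adj f a := fun h => naf h.symm
    have ndb : ¬ G.Adj d b := fun h => nbd h.symm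
    have neb : ¬ G.Adj e b := fun h => nbe h.symm
    have nfb : ¬ G.Adj f b := fun h => nbf h.symm
    have ndc : ¬ G.Adj d c := fun h => ncd h.symm
    have nec : ¬ G.Adj e c := fun h => nce h.symm
    have nfc : ¬ G.Adj f c := fun h => ncf h.symm
    have e1 : a ≠ d := crossne a haZ d hdZ'
    have e2 : a ≠ e := crossne a haZ e heZ'
    have e3 : a ≠ f := crossne a haZ f hfZ'
    have e4 : b ≠ d := crossne b hbZ d hdZ'
    have e5 : b ≠ e := crossne b hbZ e heZ'
    have e6 : b ≠ f := crossne b hbZ f hfZ'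
    have e7 : c ≠ d := crossne c hcZ d hdZ'
    have e8 : c ≠ e := crossne c hcZ e heZ'
    have e9 : c ≠ f := crossne c hcZ f hfZ'
    by_cases hACadj : G.Adj a c <;> by_cases hDFadj : G.Adj d f
    · refine h2 (copy_of14 G pat2K3 (vec6 a b c d e f)
        (inj6 hab hac e1 e2 e3 hbc e4 e5 e6 e7 e8 e9 hde hdf hef) ?_)
      intro i j hij
      fin_cases i <;> fin_cases j <;> simp only [vec6] <;> norm_num <;>
        first
          | exact absurd hij (by decide)
          | exact iff_of_true (by assumption) (by decide)
          | exact iff_of_false (by assumption) (by decide)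
    · refine h3 (copy_of14 G patP3K3 (vec6 d e f a b c)
        (inj6 hde hdf (fun h => e1 h.symm) (fun h => e4 h.symm) (fun h => e7 h.symm)
          hef (fun h => e2 h.symm) (fun h => e5 h.symm) (fun h => e8 h.symm)
          (fun h => e3 h.symm) (fun h => e6 h.symm) (fun h => e9 h.symm) hab hac hbc) ?_)
      intro i j hij
      fin_cases i <;> fin_cases j <;> simp only [vec6] <;> norm_num <;>
        first
          | exact absurd hij (by decide)
          | exact iff_of_true (by assumption) (by decide)
          | exact iff_of_false (by assumption) (by decide)
    · refine h3 (copy_of14 G patP3K3 (vec6 a b c d e f)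
        (inj6 hab hac e1 e2 e3 hbc e4 e5 e6 e7 e8 e9 hde hdf hef) ?_)
      intro i j hij
      fin_cases i <;> fin_cases j <;> simp only [vec6] <;> norm_num <;>
        first
          | exact absurd hij (by decide)
          | exact iff_of_true (by assumption) (by decide)
          | exact iff_of_false (by assumption) (by decide)
    · refine h1 (copy_of14 G pat2P3 (vec6 a b c d e f)
        (inj6 hab hac e1 e2 e3 hbc e4 e5 e6 e7 e8 e9 hde hdf hef) ?_)
      intro i j hij
      fin_cases i <;> fin_cases j <;> simp only [vec6] <;> norm_num <;>
        first
          | exact absurd hij (by decide)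
          | exact iff_of_true (by assumption) (by decide)
          | exact iff_of_false (by assumption) (by decide)
end

section
/- Let G be a graph such that some connected component of G[V \ Q] has at least h+1 vertices for a clique Q. If G contains no induced subgraph isomorphic to a disjoint union of two connected graphs on h+1 vertices each, then the set Q2 of vertices of Q with no neighbor in that component has size at most h. -/
open SimpleGraph

private def valHom {V : Type*} (G : SimpleGraph V) (S : Set V) : G.induce S →g G where
  toFun := Subtype.val
  map_rel' := fun h => h

private lemma singleton_connected {V : Type*} (G : SimpleGraph V) (v : V) :
    (G.induce {v}).Connected := by
  rw [connected_iff]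
  refine ⟨fun x y => ?_, ⟨⟨v, rfl⟩⟩⟩
  have : x = y := Subtype.ext (x.2.trans y.2.symm)
  exact this ▸ Reachable.refl x

private lemma grow_connected {V : Type*} (G : SimpleGraph V) {B : Set V}
    (hB : (G.induce B).Connected) {v b : V} (hb : b ∈ B) (hadj : G.Adj v b) :
    (G.induce (insert v B)).Connected := by
  have := G.connected_induce_union (singleton_connected G v).preconnected hB.preconnected rfl hb hadj
  rwa [Set.singleton_union] at this

private lemma boundary_adj {V : Type*} (G : SimpleGraph V) {Z B : Set V}
    (hZ : (G.induce Z).Connected) (hBZ : B ⊆ Z) {b : V} (hb : b ∈ B)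
    {z : V} (hz : z ∈ Z) (hzB : z ∉ B) :
    ∃ x ∈ B, ∃ y ∈ Z, y ∉ B ∧ G.Adj x y := by
  obtain ⟨p⟩ := hZ.preconnected ⟨b, hBZ hb⟩ ⟨z, hz⟩
  obtain ⟨d, _, hdf, hds⟩ := p.exists_boundary_dart {x : Z | x.val ∈ B} hb hzB
  exact ⟨d.fst.val, hdf, d.snd.val, d.snd.2, hds, d.adj⟩

private lemma exists_connected_subset {V : Type*} [Fintype V] (G : SimpleGraph V) {Z : Set V}
    (hZ : (G.induce Z).Connected) :
    ∀ k, 1 ≤ k → k ≤ Z.ncard → ∃ B ⊆ Z, B.ncard = k ∧ (G.induce B).Connected := by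
  intro k
  induction k with
  | zero => exact fun h => absurd h (by norm_num)
  | succ n ih =>
    intro _ hk
    rcases Nat.eq_zero_or_pos n with rfl | hn
    · have hZne : Z.Nonempty := Set.nonempty_of_ncard_ne_zero (by omega)
      obtain ⟨z, hz⟩ := hZne
      exact ⟨{z}, Set.singleton_subset_iff.2 hz, Set.ncard_singleton z,
        singleton_connected G z⟩
    · obtain ⟨B, hBZ, hBn, hBc⟩ := ih hn (by omega)
      have hBne : B.Nonempty := Set.nonempty_of_ncard_ne_zero (by omega)
      obtain ⟨b, hb⟩ := hBne
      have hne : B ≠ Z := fun hEq => by rw [hEq] at hBn; omega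
      obtain ⟨z, hz, hzB⟩ := Set.exists_of_ssubset (hBZ.ssubset_of_ne hne)
      obtain ⟨x, hx, y, hyZ, hyB, hxy⟩ := boundary_adj G hZ hBZ hb hz hzB
      refine ⟨insert y B, Set.insert_subset hyZ hBZ, ?_, grow_connected G hBc hx hxy.symm⟩
      rw [Set.ncard_insert_of_notMem hyB B.toFinite, hBn]

private lemma comp_subset_connected {V : Type*} (G : SimpleGraph V) {S Z : Set V}
    (hZ : IsCompOf G S Z) : Z ⊆ S ∧ (G.induce Z).Connected := by
  classical
  obtain ⟨c, rfl⟩ := hZ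
  refine ⟨by rintro x ⟨y, _, rfl⟩; exact y.2, ?_⟩
  obtain ⟨u', hu'⟩ := c.exists_rep
  refine G.induce_connected_of_patches u'.val ⟨u', hu', rfl⟩ ?_
  rintro v ⟨v', hv', rfl⟩
  obtain ⟨p⟩ := ConnectedComponent.exact (hu'.trans hv'.symm : _ = _)
  set q := p.map (valHom G S) with hq
  have hsupp : {x | x ∈ q.support} ⊆
      Subtype.val '' {v : S | (G.induce S).connectedComponentMk v = c} := by
    intro x hx
    simp only [hq, Walk.support_map, List.mem_map, Set.mem_setOf_eq] at hx
    obtain ⟨y, hy, rfl⟩ := hx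
    have : (G.induce S).Reachable u' y := Walk.reachable (p.takeUntil y hy)
    exact ⟨y, (ConnectedComponent.sound this).symm.trans hu', rfl⟩
  have hconn := q.connected_induce_support
  refine ⟨_, hsupp, q.start_mem_support, q.end_mem_support, ?_⟩
  exact hconn.preconnected _ _

theorem stmt15 {V : Type*} [Fintype V] (G : SimpleGraph V) (h : ℕ) (hh : 1 ≤ h)
    (Q Z : Set V) (hQ : G.IsClique Q) (hZ : IsCompOf G Qᶜ Z) (hZh : h + 1 ≤ Z.ncard)
    (hfree : ¬ HasTwoConnParts G (h + 1)) :
    {q ∈ Q | ¬ ∃ z ∈ Z, G.Adj q z}.ncard ≤ h := by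
  by_contra hcon
  push_neg at hcon
  obtain ⟨hZQ, hZconn⟩ := comp_subset_connected G hZ
  -- A : subset of Q2 of size h+1
  obtain ⟨A, hAsub, hAcard⟩ := Set.exists_subset_card_eq (show h + 1 ≤ _ from hcon)
  -- B : connected subset of Z of size h+1
  obtain ⟨B, hBZ, hBcard, hBconn⟩ := exists_connected_subset G hZconn (h + 1) (by omega) hZh
  apply hfree
  refine ⟨A, B, ?_, hAcard, hBcard, ?_, hBconn, ?_⟩
  · -- A ⊆ Q, B ⊆ Z ⊆ Qᶜ
    refine Set.disjoint_left.2 fun x hxA hxB => ?_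
    exact (hZQ (hBZ hxB)) (hAsub hxA).1
  · -- A is a clique of size h+1 ≥ 2, hence connected
    have hAQ : A ⊆ Q := fun x hx => (hAsub hx).1
    have hAne : A.Nonempty := Set.nonempty_of_ncard_ne_zero (by omega)
    rw [connected_iff]
    refine ⟨fun x y => ?_, hAne.to_subtype⟩
    rcases eq_or_ne x y with rfl | hne
    · exact Reachable.refl x
    · exact Adj.reachable (hQ (hAQ x.2) (hAQ y.2) (fun hxy => hne (Subtype.ext hxy)))
  · intro a ha b hb hab
    have hm := hAsub ha
    simp only [Set.mem_setOf_eq] at hm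
    exact hm.2 b (hBZ hb) hab
end

section
/- Let G be a chordal graph with a maximum clique Q, and suppose x, y ∉ Q are adjacent vertices each having a neighbor in Q and each having exactly one non-neighbor in Q. Then x and y have the same unique non-neighbor in Q, and (Q \ {q}) ∪ {x, y} is a clique strictly larger than Q, a contradiction; hence no such x, y exist: for every edge xy with x, y ∈ N(Q), at least one of x, y has at least two non-neighbors in Q. -/
open SimpleGraph

theorem stmt18 {V : Type*} [Fintype V] (G : SimpleGraph V) (hc : Chordal G)
    (Q : Set V) (hQ : IsMaxClique G Q) :
    ∀ x y : V, x ∉ Q → y ∉ Q → G.Adj x y →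
      (∃ q ∈ Q, G.Adj x q) → (∃ q ∈ Q, G.Adj y q) →
      2 ≤ {q ∈ Q | ¬ G.Adj x q}.ncard ∨ 2 ≤ {q ∈ Q | ¬ G.Adj y q}.ncard := by
  intro x y hxQ hyQ hxy _ _
  by_contra hcon
  push_neg at hcon
  obtain ⟨h1, h2⟩ := hcon
  have hQfin : Q.Finite := Set.toFinite Q
  -- every vertex outside Q has a nonneighbor in Q
  have hne : ∀ z : V, z ∉ Q → {q ∈ Q | ¬ G.Adj z q}.Nonempty := by
    intro z hz
    rw [Set.nonempty_iff_ne_empty]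
    intro hemp
    have hall : ∀ q ∈ Q, z ≠ q → G.Adj z q := by
      intro q hq _
      by_contra hadj
      exact (Set.eq_empty_iff_forall_notMem.mp hemp) q ⟨hq, hadj⟩
    have hclique : G.IsClique (insert z Q) := hQ.1.insert (fun b hb hb' => hall b hb hb')
    have hle := hQ.2 _ hclique
    have heq : (insert z Q).ncard = Q.ncard + 1 := Set.ncard_insert_of_notMem hz hQfin
    omega
  have hsing : ∀ z : V, z ∉ Q → {q ∈ Q | ¬ G.Adj z q}.ncard < 2 →
      ∃ qz, {q ∈ Q | ¬ G.Adj z q} = {qz} := by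
    intro z hz hlt
    have hpos : 0 < {q ∈ Q | ¬ G.Adj z q}.ncard :=
      (Set.ncard_pos (hQfin.subset (Set.sep_subset _ _))).mpr (hne z hz)
    exact Set.ncard_eq_one.mp (by omega)
  obtain ⟨qx, hqx⟩ := hsing x hxQ h1
  obtain ⟨qy, hqy⟩ := hsing y hyQ h2
  have hqxQ : qx ∈ Q := (hqx ▸ (Set.mem_singleton qx) : qx ∈ {q ∈ Q | ¬ G.Adj x q}).1
  have hqyQ : qy ∈ Q := (hqy ▸ (Set.mem_singleton qy) : qy ∈ {q ∈ Q | ¬ G.Adj y q}).1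
  have hnxqx : ¬ G.Adj x qx := (hqx ▸ (Set.mem_singleton qx) : qx ∈ {q ∈ Q | ¬ G.Adj x q}).2
  have hnyqy : ¬ G.Adj y qy := (hqy ▸ (Set.mem_singleton qy) : qy ∈ {q ∈ Q | ¬ G.Adj y q}).2
  have hxall : ∀ q ∈ Q, q ≠ qx → G.Adj x q := by
    intro q hq hne'
    by_contra hadj
    exact hne' (Set.mem_singleton_iff.mp (hqx ▸ (⟨hq, hadj⟩ : q ∈ {q ∈ Q | ¬ G.Adj x q})))
  have hyall : ∀ q ∈ Q, q ≠ qy → G.Adj y q := by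
    intro q hq hne'
    by_contra hadj
    exact hne' (Set.mem_singleton_iff.mp (hqy ▸ (⟨hq, hadj⟩ : q ∈ {q ∈ Q | ¬ G.Adj y q})))
  -- qx = qy, else induced C4
  have hqeq : qx = qy := by
    by_contra hneq
    have a12 : G.Adj y qx := hyall qx hqxQ hneq
    have a23 : G.Adj qx qy := hQ.1 hqxQ hqyQ hneq
    have a30 : G.Adj qy x := (hxall qy hqyQ (fun h => hneq h.symm)).symm
    have hxny : x ≠ y := hxy.ne
    have hxqx : x ≠ qx := fun h => hxQ (h ▸ hqxQ)
    have hxqy : x ≠ qy := fun h => hxQ (h ▸ hqyQ)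
    have hyqx : y ≠ qx := fun h => hyQ (h ▸ hqxQ)
    have hyqy : y ≠ qy := fun h => hyQ (h ▸ hqyQ)
    have hn1 : ¬ G.Adj qx x := fun h => hnxqx h.symm
    have hn2 : ¬ G.Adj qy y := fun h => hnyqy h.symm
    apply hc 4 (le_refl 4) ![x, y, qx, qy]
    constructor
    · intro i j hij
      fin_cases i <;> fin_cases j <;> simp_all <;> omega
    · intro i j
      fin_cases i <;> fin_cases j <;>
        simp_all [G.ne_of_adj hxy, G.ne_of_adj a12, G.ne_of_adj a23, G.ne_of_adj a30,
          hxy.symm, a12.symm, a23.symm, a30.symm, G.irrefl] <;>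
        first
        | omega
        | (intro h; exact (by omega : False))
        | skip
  -- now Q \ {qx} ∪ {x, y} is a bigger clique
  subst hqeq
  set Q' : Set V := insert x (insert y (Q \ {qx})) with hQ'def
  have hxyadjQ : ∀ q ∈ Q, q ≠ qx → G.Adj x q ∧ G.Adj y q := fun q hq h =>
    ⟨hxall q hq h, hyall q hq h⟩
  have hclique' : G.IsClique Q' := by
    intro a ha b hb hab
    simp only [hQ'def, Set.mem_insert_iff, Set.mem_diff, Set.mem_singleton_iff] at ha hb
    rcases ha with rfl | rfl | ⟨haQ, hane⟩ <;> rcases hb with rfl | rfl | ⟨hbQ, hbne⟩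
    · exact absurd rfl hab
    · exact hxy
    · exact hxall b hbQ hbne
    · exact hxy.symm
    · exact absurd rfl hab
    · exact hyall b hbQ hbne
    · exact (hxall a haQ hane).symm
    · exact (hyall a haQ hane).symm
    · exact hQ.1 haQ hbQ hab
  have hle := hQ.2 _ hclique'
  have hxnot : x ∉ insert y (Q \ {qx}) := by
    simp only [Set.mem_insert_iff, Set.mem_diff]
    push_neg
    exact ⟨hxy.ne, fun h => absurd h hxQ⟩
  have hynot : y ∉ Q \ {qx} := fun h => hyQ h.1
  have hfin1 : (Q \ {qx}).Finite := hQfin.diff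
  have hc1 : (insert y (Q \ {qx})).ncard = (Q \ {qx}).ncard + 1 :=
    Set.ncard_insert_of_notMem hynot hfin1
  have hc2 : Q'.ncard = (insert y (Q \ {qx})).ncard + 1 :=
    Set.ncard_insert_of_notMem hxnot (hfin1.insert y)
  have hc3 : (Q \ {qx}).ncard = Q.ncard - 1 := Set.ncard_diff_singleton_of_mem hqxQ
  have hQpos : 0 < Q.ncard := (Set.ncard_pos hQfin).mpr ⟨qx, hqxQ⟩
  omega
end
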